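/- If a convexity space has Radon number r (every multiset of r points can be partitioned into 2 parts with intersecting convex hulls), then for all k, l the multiset Radon numbers satisfy r_{kl} ≤ r_k · r_l: every multiset of r_k · r_l points can be partitioned into kl parts whose convex hulls have a common point. -/
import Mathlib

/-- The convex hull in a convexity space. -/
def convHull {X : Type*} (C : Set (Set X)) (S : Set X) : Set X :=
  ⋂₀ {c | c ∈ C ∧ S ⊆ c}

/-- A multiset Radon-type partition witness: `P` splits into `k` sub-multisets whose
convex hulls share a common point. -/
def HasRadonPartition {X : Type*} (C : Set (Set X)) (k : ℕ) (P : Multiset X) : Prop :=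
  ∃ parts : Fin k → Multiset X,
    (∑ i, parts i) = P ∧ ∃ x : X, ∀ i, x ∈ convHull C {a | a ∈ parts i}

section Aux
variable {X : Type*} {C : Set (Set X)}

lemma subset_convHull (S : Set X) : S ⊆ convHull C S := by
  intro a ha c hc; exact hc.2 ha

lemma convHull_mem (h_inter : ∀ D ⊆ C, ⋂₀ D ∈ C) (S : Set X) : convHull C S ∈ C :=
  h_inter _ (fun c hc => hc.1)

lemma convHull_min {S c : Set X} (hc : c ∈ C) (hS : S ⊆ c) : convHull C S ⊆ c :=
  Set.sInter_subset_of_mem ⟨hc, hS⟩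

lemma convHull_subset_convHull (h_inter : ∀ D ⊆ C, ⋂₀ D ∈ C) {S T : Set X}
    (h : S ⊆ convHull C T) : convHull C S ⊆ convHull C T :=
  convHull_min (convHull_mem h_inter T) h

lemma convHull_mono (h_inter : ∀ D ⊆ C, ⋂₀ D ∈ C) {S T : Set X} (h : S ⊆ T) :
    convHull C S ⊆ convHull C T :=
  convHull_subset_convHull h_inter (h.trans (subset_convHull T))

end Aux

/-- Lift a sub-multiset of a mapped multiset. -/
lemma lift_le {α β : Type*} {f : α → β} :
    ∀ (t : Multiset β) (m : Multiset α), t ≤ Multiset.map f m →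
      ∃ m' ≤ m, Multiset.map f m' = t := by
  intro t
  induction t using Multiset.induction with
  | empty => exact fun m _ => ⟨0, Multiset.zero_le m, rfl⟩
  | cons a t ih =>
    intro m h
    have ha : a ∈ Multiset.map f m := Multiset.mem_of_le h (Multiset.mem_cons_self a t)
    obtain ⟨b, hb, rfl⟩ := Multiset.mem_map.1 ha
    obtain ⟨m₀, rfl⟩ := Multiset.exists_cons_of_mem hb
    rw [Multiset.map_cons, Multiset.cons_le_cons_iff] at h
    obtain ⟨m', hm', hmap⟩ := ih m₀ h
    exact ⟨b ::ₘ m', Multiset.cons_le_cons b hm', by rw [Multiset.map_cons, hmap]⟩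

/-- Lift a decomposition of a mapped multiset into `k` summands. -/
lemma lift_sum {α β : Type*} {f : α → β} :
    ∀ (k : ℕ) (s : Fin k → Multiset β) (m : Multiset α),
      (∑ i, s i) = Multiset.map f m →
      ∃ t : Fin k → Multiset α, (∑ i, t i) = m ∧ ∀ i, Multiset.map f (t i) = s i := by
  intro k
  induction k with
  | zero =>
    intro s m h
    refine ⟨fun i => 0, ?_, fun i => i.elim0⟩
    simp only [Finset.univ_eq_empty, Finset.sum_empty] at h ⊢
    exact (Multiset.map_eq_zero.1 h.symm).symm
  | succ n ih =>
    intro s m h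
    rw [Fin.sum_univ_succ] at h
    have h0 : s 0 ≤ Multiset.map f m := by
      rw [← h]; exact Multiset.le_add_right _ _
    obtain ⟨m0, hm0le, hm0⟩ := lift_le (s 0) m h0
    obtain ⟨m1, hm1⟩ := Multiset.le_iff_exists_add.1 hm0le
    have hrest : (∑ i : Fin n, s i.succ) = Multiset.map f m1 := by
      rw [hm1, Multiset.map_add, hm0] at h
      exact add_left_cancel h
    obtain ⟨t, ht, htmap⟩ := ih (fun i => s i.succ) m1 hrest
    refine ⟨Fin.cons m0 t, ?_, ?_⟩
    · rw [Fin.sum_univ_succ, Fin.cons_zero]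
      simp only [Fin.cons_succ]
      rw [ht, hm1]
    · intro i
      refine Fin.cases ?_ ?_ i
      · rw [Fin.cons_zero]; exact hm0
      · intro j; rw [Fin.cons_succ]; exact htmap j

/-- Split a multiset of cardinality `n * m` into `n` parts of cardinality `m`. -/
lemma split_groups {X : Type*} :
    ∀ (n m : ℕ) (P : Multiset X), Multiset.card P = n * m →
      ∃ G : Fin n → Multiset X, (∑ i, G i) = P ∧ ∀ i, Multiset.card (G i) = m := by
  intro n
  induction n with
  | zero =>
    intro m P h
    simp only [Nat.zero_mul, Multiset.card_eq_zero] at h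
    refine ⟨fun i => 0, ?_, fun i => i.elim0⟩
    simp [h]
  | succ n ih =>
    intro m P h
    set L := P.toList with hL
    have hlen : L.length = (n + 1) * m := by
      rw [hL, Multiset.length_toList, h]
    have hsplit : P = (↑(L.take m) : Multiset X) + ↑(L.drop m) := by
      rw [show (↑(L.take m) : Multiset X) + ↑(L.drop m) = ↑(L.take m ++ L.drop m) from
        (Multiset.coe_add _ _).symm, List.take_append_drop]
      exact (Multiset.coe_toList P).symm
    have hcard_take : Multiset.card (↑(L.take m) : Multiset X) = m := by
      simp [Multiset.coe_card, List.length_take, hlen]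
      nlinarith
    have hcard_drop : Multiset.card (↑(L.drop m) : Multiset X) = n * m := by
      simp [Multiset.coe_card, List.length_drop, hlen]
      ring_nf
      omega
    obtain ⟨G, hG, hGcard⟩ := ih m _ hcard_drop
    refine ⟨Fin.cons ↑(L.take m) G, ?_, ?_⟩
    · rw [Fin.sum_univ_succ, Fin.cons_zero]
      simp only [Fin.cons_succ]
      rw [hG, ← hsplit]
    · intro i
      refine Fin.cases ?_ ?_ i
      · rw [Fin.cons_zero]; exact hcard_take
      · intro j; rw [Fin.cons_succ]; exact hGcard j

/-- `r_{kl} ≤ r_k · r_l` for multiset Radon numbers: if every multiset of `rk` points admits a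
Radon `k`-partition and every multiset of `rl` points admits a Radon `l`-partition, then every
multiset of `rk * rl` points admits a Radon `k*l`-partition. -/
theorem radon_mul {X : Type*} (C : Set (Set X))
    (h_empty : ∅ ∈ C) (h_univ : Set.univ ∈ C) (h_inter : ∀ D ⊆ C, ⋂₀ D ∈ C)
    (r k l rk rl : ℕ) (hk : 2 ≤ k) (hl : 2 ≤ l) (hr : 2 ≤ r)
    (hradon : ∀ P : Multiset X, Multiset.card P = r → HasRadonPartition C 2 P)
    (hrk : ∀ P : Multiset X, Multiset.card P = rk → HasRadonPartition C k P)
    (hrl : ∀ P : Multiset X, Multiset.card P = rl → HasRadonPartition C l P) :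
    ∀ P : Multiset X, Multiset.card P = rk * rl → HasRadonPartition C (k * l) P := by
  intro P hP
  -- Split P into rk groups of size rl
  obtain ⟨G, hGsum, hGcard⟩ := split_groups rk rl P hP
  -- For each group, an l-partition with witness point
  choose Pl hPlsum y hy using fun i => hrl (G i) (hGcard i)
  -- The multiset of witness points has cardinality rk
  have hM : Multiset.card ((Finset.univ : Finset (Fin rk)).val.map y) = rk := by
    simp
  obtain ⟨Q, hQsum, x, hx⟩ := hrk _ hM
  -- Lift the partition of witness points to a partition of indices
  obtain ⟨T, hTsum, hTmap⟩ := lift_sum k Q Finset.univ.val hQsum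
  -- Define the k*l parts
  let e : Fin k × Fin l ≃ Fin (k * l) := finProdFinEquiv
  refine ⟨fun p => ((T (e.symm p).1).map (fun i => Pl i (e.symm p).2)).sum, ?_, x, ?_⟩
  · -- total sum is P
    have swap : ∀ (m : Multiset (Fin rk)),
        (∑ j : Fin l, (m.map (fun i => Pl i j)).sum) = (m.map G).sum := by
      intro m
      induction m using Multiset.induction with
      | empty => simp
      | cons a m ih =>
        simp only [Multiset.map_cons, Multiset.sum_cons, Finset.sum_add_distrib, ih, hPlsum a]
    let φ : Multiset (Fin rk) →+ Multiset X :=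
      { toFun := fun t => (t.map G).sum
        map_zero' := rfl
        map_add' := by intro a b; simp }
    calc (∑ p : Fin (k * l), ((T (e.symm p).1).map (fun i => Pl i (e.symm p).2)).sum)
        = ∑ q : Fin k × Fin l, ((T q.1).map (fun i => Pl i q.2)).sum := by
          rw [← Equiv.sum_comp e (fun p => ((T (e.symm p).1).map (fun i => Pl i (e.symm p).2)).sum)]
          simp only [Equiv.symm_apply_apply]
      _ = ∑ s : Fin k, ∑ j : Fin l, ((T s).map (fun i => Pl i j)).sum := by
          rw [Fintype.sum_prod_type]
      _ = ∑ s : Fin k, ((T s).map G).sum := by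
          exact Finset.sum_congr rfl (fun s _ => swap (T s))
      _ = φ (∑ s, T s) := (map_sum φ T Finset.univ).symm
      _ = ((Finset.univ.val).map G).sum := by rw [hTsum]; rfl
      _ = ∑ i, G i := rfl
      _ = P := hGsum
  · -- common point
    intro p
    set s := (e.symm p).1
    set j := (e.symm p).2
    have hxQ : x ∈ convHull C {a | a ∈ Q s} := hx s
    refine convHull_subset_convHull h_inter ?_ hxQ
    intro a ha
    rw [← hTmap s] at ha
    simp only [Set.mem_setOf_eq, Multiset.mem_map] at ha
    obtain ⟨i, hi, rfl⟩ := ha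
    -- y i ∈ convHull of part (s, j)
    have hyi : y i ∈ convHull C {a | a ∈ Pl i j} := hy i j
    refine convHull_mono h_inter ?_ hyi
    intro b hb
    have hle : Pl i j ≤ ((T s).map (fun i => Pl i j)).sum := by
      have : Pl i j ∈ (T s).map (fun i => Pl i j) := Multiset.mem_map_of_mem _ hi
      obtain ⟨rest, hrest⟩ := Multiset.exists_cons_of_mem this
      rw [hrest, Multiset.sum_cons]
      exact Multiset.le_add_right _ _
    exact Multiset.mem_of_le hle hb
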